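/- arXiv:2202.08740 — 2 statements merged into one kernel-verified Lean document; each statement's English description precedes it below -/
import Mathlib

section
/- For every three times continuously differentiable matrix field P : ℝ³ → ℝ³ˣ³, the scalar field div(Div(sym Curl P)) vanishes identically, i.e. div Div sym Curl P = 0 at every point of ℝ³. Consequently the range of the operator sym Curl is contained in the kernel of the operator div Div. -/
/-- Partial derivative ∂ⱼ of a scalar field on ℝ³. -/
noncomputable def pd (j : Fin 3) (f : (Fin 3 → ℝ) → ℝ) (x : Fin 3 → ℝ) : ℝ :=
  fderiv ℝ f x (Pi.single j 1)

/-- curl of a vector field on ℝ³. -/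
noncomputable def vcurl (v : (Fin 3 → ℝ) → (Fin 3 → ℝ)) (x : Fin 3 → ℝ) : Fin 3 → ℝ :=
  ![pd 1 (fun y => v y 2) x - pd 2 (fun y => v y 1) x,
    pd 2 (fun y => v y 0) x - pd 0 (fun y => v y 2) x,
    pd 0 (fun y => v y 1) x - pd 1 (fun y => v y 0) x]

/-- divergence of a vector field on ℝ³. -/
noncomputable def vdiv (v : (Fin 3 → ℝ) → (Fin 3 → ℝ)) (x : Fin 3 → ℝ) : ℝ :=
  pd 0 (fun y => v y 0) x + pd 1 (fun y => v y 1) x + pd 2 (fun y => v y 2) x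

/-- Row-wise matrix Curl of a matrix field on ℝ³. -/
noncomputable def MCurl (P : (Fin 3 → ℝ) → Fin 3 → Fin 3 → ℝ) (x : Fin 3 → ℝ) :
    Fin 3 → Fin 3 → ℝ :=
  fun i => vcurl (fun y => P y i) x

/-- Row-wise matrix divergence of a matrix field on ℝ³. -/
noncomputable def MDiv (P : (Fin 3 → ℝ) → Fin 3 → Fin 3 → ℝ) (x : Fin 3 → ℝ) : Fin 3 → ℝ :=
  fun i => vdiv (fun y => P y i) x

/-- Symmetric part of a 3×3 matrix (as a function). -/
noncomputable def msym (M : Fin 3 → Fin 3 → ℝ) : Fin 3 → Fin 3 → ℝ :=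
  fun i j => (M i j + M j i) / 2

/-!
Every row of `Curl P` is a curl, hence divergence free, so `Div (Curl P) = 0` and a fortiori
`div Div (Curl P) = 0`. For any `C²` matrix field `M`, `div Div M = ∑ᵢⱼ ∂ᵢ∂ⱼ Mᵢⱼ` is invariant
under transposing `M` because second partial derivatives commute; hence
`div Div (sym M) = div Div M`, and it remains to take `M = Curl P`.
-/

section SecondDerivative

variable {𝕜 E F : Type*} [RCLike 𝕜] [NormedAddCommGroup E] [NormedSpace 𝕜 E]
  [NormedAddCommGroup F] [NormedSpace 𝕜 F]

theorem fderiv_fderiv_apply_comm {f : E → F} {x : E} (hf : ContDiffAt 𝕜 2 f x) (v w : E) :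
    fderiv 𝕜 (fun y => fderiv 𝕜 f y w) x v = fderiv 𝕜 (fun y => fderiv 𝕜 f y v) x w := by
  have hf' : DifferentiableAt 𝕜 (fderiv 𝕜 f) x :=
    (hf.fderiv_right (m := 1) le_rfl).differentiableAt one_ne_zero
  have hsymm : IsSymmSndFDerivAt 𝕜 f x := hf.isSymmSndFDerivAt (by simp)
  rw [fderiv_clm_apply hf' (differentiableAt_const w),
    fderiv_clm_apply hf' (differentiableAt_const v)]
  simpa using hsymm v w

end SecondDerivative

theorem contDiff_pd {n : WithTop ℕ∞} {f : (Fin 3 → ℝ) → ℝ} (hf : ContDiff ℝ (n + 1) f)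
    (j : Fin 3) : ContDiff ℝ n (pd j f) :=
  (hf.fderiv_right le_rfl).clm_apply contDiff_const

theorem differentiable_pd {f : (Fin 3 → ℝ) → ℝ} (hf : ContDiff ℝ 2 f) (j : Fin 3) :
    Differentiable ℝ (pd j f) :=
  (contDiff_pd (n := 1) hf j).differentiable one_ne_zero

theorem pd_add {f g : (Fin 3 → ℝ) → ℝ} (hf : Differentiable ℝ f) (hg : Differentiable ℝ g)
    (j : Fin 3) : pd j (fun y => f y + g y) = fun y => pd j f y + pd j g y := by
  ext y
  simp [pd, fderiv_fun_add (hf y) (hg y)]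

theorem pd_sub {f g : (Fin 3 → ℝ) → ℝ} (hf : Differentiable ℝ f) (hg : Differentiable ℝ g)
    (j : Fin 3) : pd j (fun y => f y - g y) = fun y => pd j f y - pd j g y := by
  ext y
  simp [pd, fderiv_fun_sub (hf y) (hg y)]

theorem pd_div_const (f : (Fin 3 → ℝ) → ℝ) (c : ℝ) (j : Fin 3) :
    pd j (fun y => f y / c) = fun y => pd j f y / c := by
  ext y
  have h : (fun y => f y / c) = c⁻¹ • f := by ext; simp [div_eq_inv_mul]
  rw [pd, h, fderiv_const_smul_field]
  simp [pd, div_eq_inv_mul]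

theorem pd_sum {ι : Type*} (s : Finset ι) {f : ι → (Fin 3 → ℝ) → ℝ}
    (hf : ∀ i ∈ s, Differentiable ℝ (f i)) (j : Fin 3) :
    pd j (fun y => ∑ i ∈ s, f i y) = fun y => ∑ i ∈ s, pd j (f i) y := by
  ext y
  simp [pd, fderiv_fun_sum fun i hi => hf i hi y]

theorem pd_const (c : ℝ) (j : Fin 3) : pd j (fun _ => c) = 0 := by
  ext; simp [pd]

theorem pd_comm {f : (Fin 3 → ℝ) → ℝ} (hf : ContDiff ℝ 2 f) (a b : Fin 3) :
    pd a (pd b f) = pd b (pd a f) := by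
  ext x
  exact fderiv_fderiv_apply_comm hf.contDiffAt _ _

theorem vdiv_eq_sum (v : (Fin 3 → ℝ) → (Fin 3 → ℝ)) (x : Fin 3 → ℝ) :
    vdiv v x = ∑ i, pd i (fun y => v y i) x := by
  rw [Fin.sum_univ_three]; rfl

theorem contDiff_vcurl {n : WithTop ℕ∞} {v : (Fin 3 → ℝ) → (Fin 3 → ℝ)}
    (hv : ContDiff ℝ (n + 1) v) : ContDiff ℝ n (vcurl v) := by
  have h : ∀ j k, ContDiff ℝ n (pd j (fun y => v y k)) := fun j k =>
    contDiff_pd (by fun_prop) j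
  refine contDiff_pi.mpr fun i => ?_
  fin_cases i
  exacts [(h 1 2).sub (h 2 1), (h 2 0).sub (h 0 2), (h 0 1).sub (h 1 0)]

theorem vdiv_vcurl {v : (Fin 3 → ℝ) → (Fin 3 → ℝ)} (hv : ContDiff ℝ 2 v) :
    vdiv (vcurl v) = 0 := by
  have hc : ∀ k, ContDiff ℝ 2 (fun y => v y k) := fun k => by fun_prop
  have hd : ∀ j k, Differentiable ℝ (pd j (fun y => v y k)) := fun j k =>
    differentiable_pd (hc k) j
  ext x
  simp only [vdiv, vcurl, Matrix.cons_val_zero, Matrix.cons_val_one, Matrix.cons_val_two,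
    Matrix.head_cons, Matrix.tail_cons, pd_sub (hd _ _) (hd _ _), pd_comm (hc _) 0,
    pd_comm (hc _) 1 2, Pi.zero_apply]
  ring

theorem contDiff_MCurl {n : WithTop ℕ∞} {P : (Fin 3 → ℝ) → Fin 3 → Fin 3 → ℝ}
    (hP : ContDiff ℝ (n + 1) P) : ContDiff ℝ n (MCurl P) :=
  contDiff_pi.mpr fun i => contDiff_vcurl (v := fun y => P y i) (by fun_prop)

noncomputable def divDiv (M : (Fin 3 → ℝ) → Fin 3 → Fin 3 → ℝ) (x : Fin 3 → ℝ) : ℝ :=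
  vdiv (fun y => MDiv M y) x

theorem divDiv_eq_sum {M : (Fin 3 → ℝ) → Fin 3 → Fin 3 → ℝ} (hM : ContDiff ℝ 2 M)
    (x : Fin 3 → ℝ) : divDiv M x = ∑ i, ∑ j, pd i (pd j (fun z => M z i j)) x := by
  have hrow : ∀ i, (fun y => MDiv M y i) = fun y => ∑ j, pd j (fun z => M z i j) y :=
    fun i => funext fun y => vdiv_eq_sum _ y
  have hd : ∀ i j, Differentiable ℝ (pd j (fun z => M z i j)) := fun i j =>
    differentiable_pd (by fun_prop) j
  simp only [divDiv, vdiv_eq_sum, hrow, pd_sum _ fun j _ => hd _ j]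

theorem divDiv_msym {M : (Fin 3 → ℝ) → Fin 3 → Fin 3 → ℝ} (hM : ContDiff ℝ 2 M)
    (x : Fin 3 → ℝ) : divDiv (fun z => msym (M z)) x = divDiv M x := by
  have hc : ∀ i j, ContDiff ℝ 2 (fun z => M z i j) := fun i j => by fun_prop
  have hd : ∀ i j, Differentiable ℝ (fun z => M z i j) := fun i j =>
    (hc i j).differentiable two_ne_zero
  have hsym : ContDiff ℝ 2 (fun z => msym (M z)) := by
    unfold msym; fun_prop
  have hterm : ∀ i j, pd i (pd j (fun z => msym (M z) i j)) x
      = (pd i (pd j (fun z => M z i j)) x + pd j (pd i (fun z => M z j i)) x) / 2 := by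
    intro i j
    simp only [msym, pd_div_const, pd_add (hd i j) (hd j i),
      pd_add (differentiable_pd (hc i j) j) (differentiable_pd (hc j i) j), pd_comm (hc j i) j i]
  rw [divDiv_eq_sum hsym, divDiv_eq_sum hM]
  simp only [hterm, ← Finset.sum_div, Finset.sum_add_distrib]
  rw [Finset.sum_comm (f := fun i j => pd j (pd i (fun z => M z j i)) x)]
  ring

theorem divDiv_MCurl {P : (Fin 3 → ℝ) → Fin 3 → Fin 3 → ℝ} (hP : ContDiff ℝ 2 P)
    (x : Fin 3 → ℝ) : divDiv (MCurl P) x = 0 := by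
  have hrows : (fun y => MDiv (MCurl P) y) = fun _ => 0 := by
    ext y i
    exact congrFun (vdiv_vcurl (v := fun z => P z i) (by fun_prop)) y
  simp [divDiv, hrows, vdiv, pd_const]

/-- For every C³ matrix field `P : ℝ³ → ℝ³ˣ³`, `div (Div (sym (Curl P))) = 0` everywhere;
consequently the range of `sym Curl` is contained in the kernel of `div Div`. -/
theorem divDiv_symCurl_eq_zero (P : (Fin 3 → ℝ) → Fin 3 → Fin 3 → ℝ)
    (hP : ContDiff ℝ 3 P) :
    ∀ x : Fin 3 → ℝ, vdiv (fun y => MDiv (fun z => msym (MCurl P z)) y) x = 0 := by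
  intro x
  change divDiv (fun z => msym (MCurl P z)) x = 0
  rw [divDiv_msym (contDiff_MCurl hP), divDiv_MCurl (hP.of_le (by norm_num))]
end

section
/- Let J ∈ ℝ³ˣ³ be invertible, b ∈ ℝ³, and let φ : ℝ³ → ℝ³ be the affine map φ(ξ) = Jξ + b. Let v : ℝ³ → ℝ³ be continuously differentiable and define the covariant Piola transform u : ℝ³ → ℝ³ by u(x) = J⁻ᵀ v(φ⁻¹(x)). Then for every x ∈ ℝ³, curl u (x) = (det J)⁻¹ · J · (curl v)(φ⁻¹(x)); i.e. the curl of a covariantly transformed vector field is given by the contravariant Piola transformation. -/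
open Matrix

/-! The curl of a differentiable field is the axial vector of the skew part of its Jacobian.
The Jacobian of `u` at `φ ξ` is `J⁻ᵀ Dv(ξ) J⁻¹`, and for every `3 × 3` matrix `M` the axial vector
of `Mᵀ A M` is `adj M` applied to the axial vector of `A` (a polynomial identity, the matrix form of
`(M a) × (M b) = adj(M)ᵀ (a × b)`). Taking `M = J⁻¹`, `adj (J⁻¹) = (det J)⁻¹ J`. -/

/-- The axial vector of `A - Aᵀ`. -/
def skewAxial {R : Type*} [CommRing R] (A : Matrix (Fin 3) (Fin 3) R) : Fin 3 → R :=
  ![A 2 1 - A 1 2, A 0 2 - A 2 0, A 1 0 - A 0 1]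

theorem skewAxial_transpose_mul_mul {R : Type*} [CommRing R] (A M : Matrix (Fin 3) (Fin 3) R) :
    skewAxial (Mᵀ * A * M) = M.adjugate *ᵥ skewAxial A := by
  ext i
  fin_cases i <;>
  · simp only [skewAxial, adjugate_fin_three, mul_apply, transpose_apply, mulVec, dotProduct,
      Fin.sum_univ_three, Fin.zero_eta, Fin.mk_one, Fin.reduceFinMk, Fin.isValue, of_apply,
      cons_val', cons_val, cons_val_zero, cons_val_one, cons_val_fin_one]
    ring

theorem vcurl_eq_skewAxial_fderiv {v : (Fin 3 → ℝ) → Fin 3 → ℝ} {x : Fin 3 → ℝ}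
    (hv : DifferentiableAt ℝ v x) :
    vcurl v x = skewAxial (LinearMap.toMatrix' (fderiv ℝ v x : (Fin 3 → ℝ) →ₗ[ℝ] Fin 3 → ℝ)) := by
  simp [vcurl, pd, fderiv_apply hv, skewAxial, LinearMap.toMatrix'_apply]

theorem hasFDerivAt_mulVec_add_const {n m : Type*} [Fintype n] [Fintype m] [DecidableEq n]
    (B : Matrix m n ℝ) (c : m → ℝ) (x : n → ℝ) :
    HasFDerivAt (fun y => B *ᵥ y + c) (LinearMap.toContinuousLinearMap (toLin' B)) x :=
  (LinearMap.toContinuousLinearMap (toLin' B)).hasFDerivAt.add_const c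

theorem hasFDerivAt_mulVec_comp_affine {n m : Type*} [Fintype n] [Fintype m] [DecidableEq n]
    [DecidableEq m] (A : Matrix m m ℝ) (B : Matrix m n ℝ) (c : m → ℝ) {v : (m → ℝ) → m → ℝ}
    {x : n → ℝ} (hv : DifferentiableAt ℝ v (B *ᵥ x + c)) :
    HasFDerivAt (fun y => A *ᵥ v (B *ᵥ y + c))
      ((LinearMap.toContinuousLinearMap (toLin' A)).comp
        ((fderiv ℝ v (B *ᵥ x + c)).comp (LinearMap.toContinuousLinearMap (toLin' B)))) x :=
  (LinearMap.toContinuousLinearMap (toLin' A)).hasFDerivAt.comp x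
    (hv.hasFDerivAt.comp x (hasFDerivAt_mulVec_add_const B c x))

theorem toMatrix'_fderiv_mulVec_comp_affine {n m : Type*} [Fintype n] [Fintype m]
    [DecidableEq n] [DecidableEq m] (A : Matrix m m ℝ) (B : Matrix m n ℝ) (c : m → ℝ)
    {v : (m → ℝ) → m → ℝ} {x : n → ℝ} (hv : DifferentiableAt ℝ v (B *ᵥ x + c)) :
    LinearMap.toMatrix' (fderiv ℝ (fun y => A *ᵥ v (B *ᵥ y + c)) x : (n → ℝ) →ₗ[ℝ] m → ℝ) =
      A * LinearMap.toMatrix' (fderiv ℝ v (B *ᵥ x + c) : (m → ℝ) →ₗ[ℝ] m → ℝ) * B := by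
  rw [(hasFDerivAt_mulVec_comp_affine A B c hv).fderiv]
  simp [LinearMap.toMatrix'_comp, Matrix.mul_assoc]

theorem vcurl_transpose_mulVec_comp_affine (B : Matrix (Fin 3) (Fin 3) ℝ) (c : Fin 3 → ℝ)
    {v : (Fin 3 → ℝ) → Fin 3 → ℝ} {x : Fin 3 → ℝ} (hv : DifferentiableAt ℝ v (B *ᵥ x + c)) :
    vcurl (fun y => Bᵀ *ᵥ v (B *ᵥ y + c)) x = B.adjugate *ᵥ vcurl v (B *ᵥ x + c) := by
  rw [vcurl_eq_skewAxial_fderiv (hasFDerivAt_mulVec_comp_affine Bᵀ B c hv).differentiableAt,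
    toMatrix'_fderiv_mulVec_comp_affine Bᵀ B c hv, skewAxial_transpose_mul_mul,
    vcurl_eq_skewAxial_fderiv hv]

theorem adjugate_nonsing_inv_of_isUnit {K n : Type*} [Field K] [Fintype n] [DecidableEq n]
    (J : Matrix n n K) (hJ : IsUnit J.det) : J⁻¹.adjugate = J.det⁻¹ • J :=
  calc J⁻¹.adjugate = J * (J⁻¹ * J⁻¹.adjugate) := by
        rw [← Matrix.mul_assoc, mul_nonsing_inv _ hJ, Matrix.one_mul]
    _ = J.det⁻¹ • J := by
        rw [mul_adjugate, det_nonsing_inv, Ring.inverse_eq_inv', Matrix.mul_smul, Matrix.mul_one]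

/-- Covariant Piola transform: if `φ ξ = J ξ + b` with `J` invertible and
`u ∘ φ = J⁻ᵀ · (v ∘ id)`, i.e. `u (φ ξ) = J⁻ᵀ v ξ`, then the curl of `u` is given by the
contravariant Piola transformation: `curl u (φ ξ) = (det J)⁻¹ J (curl v ξ)`. -/
theorem curl_covariant_piola (J : Matrix (Fin 3) (Fin 3) ℝ) (hJ : IsUnit J.det)
    (b : Fin 3 → ℝ) (φ : (Fin 3 → ℝ) → Fin 3 → ℝ)
    (hφ : ∀ ξ : Fin 3 → ℝ, φ ξ = J.mulVec ξ + b)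
    (v : (Fin 3 → ℝ) → Fin 3 → ℝ) (hv : ContDiff ℝ 1 v)
    (u : (Fin 3 → ℝ) → Fin 3 → ℝ)
    (hu : ∀ ξ : Fin 3 → ℝ, u (φ ξ) = (Jᵀ)⁻¹.mulVec (v ξ)) :
    ∀ ξ : Fin 3 → ℝ, vcurl u (φ ξ) = (J.det)⁻¹ • J.mulVec (vcurl v ξ) := by
  intro ξ
  have hφ_inv : ∀ y, J⁻¹ *ᵥ φ y + -(J⁻¹ *ᵥ b) = y := fun y => by
    rw [hφ, mulVec_add, mulVec_mulVec, nonsing_inv_mul _ hJ, one_mulVec, add_neg_cancel_right]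
  have hu_eq : u = fun y => J⁻¹ᵀ *ᵥ v (J⁻¹ *ᵥ y + -(J⁻¹ *ᵥ b)) := by
    funext y
    obtain ⟨η, rfl⟩ : ∃ η, φ η = y := ⟨J⁻¹ *ᵥ (y - b), by
      rw [hφ, mulVec_mulVec, mul_nonsing_inv _ hJ, one_mulVec, sub_add_cancel]⟩
    rw [hu, hφ_inv, transpose_nonsing_inv]
  have hv_diff : DifferentiableAt ℝ v (J⁻¹ *ᵥ φ ξ + -(J⁻¹ *ᵥ b)) :=
    hv.differentiable one_ne_zero _
  rw [hu_eq, vcurl_transpose_mulVec_comp_affine _ _ hv_diff, hφ_inv,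
    adjugate_nonsing_inv_of_isUnit J hJ, smul_mulVec]
end
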